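/- Let n ∈ ℤ₊, let ω ∈ ℝⁿ be rationally independent, let K be a compact Hausdorff topological space, F: 𝕋ⁿ → K a surjective continuous mapping, and 𝔊 a continuous action of ℝ on K such that F(φ + ωt) = 𝔊^t(F(φ)) for all φ ∈ 𝕋ⁿ and t ∈ ℝ. Then the set Λ = F⁻¹({F(0)}) is a closed subgroup of the topological group 𝕋ⁿ, and F induces a bijection from the quotient group 𝕋ⁿ/Λ onto K (which is a homeomorphism, 𝕋ⁿ/Λ being compact and K Hausdorff). -/

import Mathlib

/-!
Kronecker: the function `x ↦ ‖x mod S‖ = infDist x S`, for `S` the orbit of `0` under the linear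
flow, is invariant under the flow. A flow-invariant function has vanishing Fourier coefficients
at every `k ≠ 0`, since `⟨k, ω⟩ ≠ 0` lets some time `t` move the character `e^{2πi⟨k,x⟩}` by a
factor `≠ 1`; so it is constant, hence zero, and the orbit is dense.

By density and continuity, `F φ = F ψ` forces `F (φ + χ) = F (ψ + χ)` for every `χ`: the fibres
of `F` are the cosets of `Λ`, and `F` descends to a continuous bijection from the compact group
`𝕋ⁿ/Λ` onto the Hausdorff space `K`.
-/

open scoped BigOperators

/-- The `n`-torus `(ℝ/2πℤ)ⁿ`. -/
abbrev Torus (n : ℕ) := Fin n → AddCircle (2 * Real.pi)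

/-- A vector `ω ∈ ℝⁿ` is rationally independent if `⟨ω,k⟩ ≠ 0` for all `k ∈ ℤⁿ \ {0}`. -/
def RationallyIndependent {n : ℕ} (ω : Fin n → ℝ) : Prop :=
  ∀ k : Fin n → ℤ, k ≠ 0 → (∑ i, (k i : ℝ) * ω i) ≠ 0

/-- The element `tω` of the torus, for `t ∈ ℝ` and `ω ∈ ℝⁿ`. -/
noncomputable def torusVec {n : ℕ} (ω : Fin n → ℝ) (t : ℝ) : Torus n :=
  fun i => ((t * ω i : ℝ) : AddCircle (2 * Real.pi))

open MeasureTheory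

namespace UnitAddTorus

variable {d : Type*}

def linearFlow (ω : d → ℝ) : ℝ →+ UnitAddTorus d :=
  AddMonoidHom.pi fun i ↦ (QuotientAddGroup.mk' _).comp (AddMonoidHom.mulRight (ω i))

theorem linearFlow_apply (ω : d → ℝ) (t : ℝ) (i : d) :
    linearFlow ω t i = ((t * ω i : ℝ) : UnitAddCircle) :=
  rfl

variable [Fintype d]

theorem mFourier_apply_add (n : d → ℤ) (x y : UnitAddTorus d) :
    mFourier n (x + y) = mFourier n x * mFourier n y := by
  simp only [mFourier, ContinuousMap.coe_mk, Pi.add_apply, fourier_apply, smul_add,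
    AddCircle.toCircle_add, Circle.coe_mul, Finset.prod_mul_distrib]

theorem mFourierCoeff_eq_zero_of_add_right_invariant {E : Type*} [NormedAddCommGroup E]
    [NormedSpace ℂ E] {f : UnitAddTorus d → E} {v : UnitAddTorus d} (hf : ∀ x, f (x + v) = f x)
    {n : d → ℤ} (hn : mFourier n v ≠ 1) : mFourierCoeff f n = 0 := by
  have hfix : mFourierCoeff f n = mFourier (-n) v • mFourierCoeff f n := by
    -- `mFourierCoeff` integrates against the product of the normalised measures `haarAddCircle`,
    -- not against the global `volume` of `UnitAddCircle`
    change ∫ t, _ ∂(Measure.pi fun _ ↦ AddCircle.haarAddCircle) =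
      _ • ∫ t, _ ∂(Measure.pi fun _ ↦ AddCircle.haarAddCircle)
    rw [← integral_smul, ← integral_add_right_eq_self _ v]
    congr 1 with t
    rw [hf, mFourier_apply_add, mul_comm, mul_smul]
  have hn' : mFourier (-n) v ≠ 1 := by
    rwa [mFourier_neg, ne_eq, map_eq_one_iff _ (RingHom.injective _)]
  have : (1 - mFourier (-n) v) • mFourierCoeff f n = 0 := by
    rw [sub_smul, one_smul, ← hfix, sub_self]
  exact (smul_eq_zero.mp this).resolve_left (sub_ne_zero.mpr hn'.symm)

theorem apply_eq_mFourierCoeff_zero_of_forall_ne_zero {f : C(UnitAddTorus d, ℂ)}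
    (hf : ∀ n ≠ 0, mFourierCoeff f n = 0) (x : UnitAddTorus d) : f x = mFourierCoeff f 0 := by
  have hsum : HasSum (fun n ↦ mFourierCoeff f n • mFourier n x)
      (mFourierCoeff f 0 • mFourier 0 x) :=
    hasSum_single 0 fun n hn ↦ by rw [hf n hn, zero_smul]
  have hsummable : Summable (mFourierCoeff f) :=
    (hasSum_single (0 : d → ℤ) hf).summable
  simpa [mFourier_zero] using (hasSum_mFourier_series_apply_of_summable hsummable x).unique hsum

theorem dense_of_forall_mFourier_ne_one (S : AddSubgroup (UnitAddTorus d))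
    (hS : ∀ n ≠ 0, ∃ v ∈ S, mFourier n v ≠ 1) : Dense (S : Set (UnitAddTorus d)) := by
  let f : C(UnitAddTorus d, ℂ) := ⟨fun x ↦ (‖(x : UnitAddTorus d ⧸ S)‖ : ℂ), by fun_prop⟩
  have hcoeff (n : d → ℤ) (hn : n ≠ 0) : mFourierCoeff f n = 0 := by
    obtain ⟨v, hvS, hv⟩ := hS n hn
    refine mFourierCoeff_eq_zero_of_add_right_invariant (fun x ↦ ?_) hv
    simp [f, (QuotientAddGroup.eq_zero_iff v).mpr hvS]
  intro x
  have hx := (apply_eq_mFourierCoeff_zero_of_forall_ne_zero hcoeff x).trans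
    (apply_eq_mFourierCoeff_zero_of_forall_ne_zero hcoeff 0).symm
  rw [← QuotientAddGroup.norm_mk_eq_zero_iff_mem_closure]
  simpa [f] using hx

theorem mFourier_linearFlow (ω : d → ℝ) (k : d → ℤ) (t : ℝ) :
    mFourier k (linearFlow ω t) =
      Complex.exp (2 * Real.pi * Complex.I * (∑ i, k i * ω i : ℝ) * t) := by
  simp only [mFourier, ContinuousMap.coe_mk, linearFlow_apply, fourier_coe_apply,
    ← Complex.exp_sum]
  push_cast
  rw [Finset.mul_sum, Finset.sum_mul]
  refine congrArg Complex.exp (Finset.sum_congr rfl fun i _ ↦ ?_)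
  ring

theorem denseRange_linearFlow {n : ℕ} {ω : Fin n → ℝ} (hω : RationallyIndependent ω) :
    DenseRange (linearFlow ω) := by
  rw [DenseRange, ← AddMonoidHom.coe_range]
  refine dense_of_forall_mFourier_ne_one _ fun k hk ↦ ?_
  refine ⟨linearFlow ω (2 * ∑ i, k i * ω i)⁻¹, ⟨_, rfl⟩, ?_⟩
  rw [mFourier_linearFlow]
  generalize hs : ∑ i, (k i : ℝ) * ω i = s
  have hs0 : (s : ℂ) ≠ 0 := Complex.ofReal_ne_zero.mpr (hs ▸ hω k hk)
  have : 2 * Real.pi * Complex.I * s * ((2 * s)⁻¹ : ℝ) = Real.pi * Complex.I := by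
    push_cast
    field_simp
  rw [this, Complex.exp_pi_mul_I]
  norm_num

end UnitAddTorus

theorem RationallyIndependent.div_const {n : ℕ} {ω : Fin n → ℝ} (hω : RationallyIndependent ω)
    {c : ℝ} (hc : c ≠ 0) : RationallyIndependent fun i ↦ ω i / c := by
  intro k hk
  simp only [← mul_div_assoc, ← Finset.sum_div]
  exact div_ne_zero (hω k hk) hc

theorem denseRange_torusVec {n : ℕ} {ω : Fin n → ℝ} (hω : RationallyIndependent ω) :
    DenseRange (torusVec ω) := by
  have h2π : 2 * Real.pi ≠ 0 := by positivity
  let rescale : UnitAddTorus (Fin n) ≃ₜ Torus n :=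
    Homeomorph.piCongrRight fun _ ↦ AddCircle.homeomorphAddCircle 1 _ one_ne_zero h2π
  have : torusVec ω = rescale ∘ UnitAddTorus.linearFlow fun i ↦ ω i / (2 * Real.pi) := by
    ext t i
    simp only [torusVec, Function.comp_apply, rescale, Homeomorph.piCongrRight_apply,
      UnitAddTorus.linearFlow_apply, AddCircle.homeomorphAddCircle_apply_mk]
    congr 1
    field_simp
  rw [this]
  exact rescale.surjective.denseRange.comp
    (UnitAddTorus.denseRange_linearFlow (hω.div_const h2π)) rescale.continuous

section FiberSubgroup

variable {G K : Type*}

theorem Dense.map_add_eq_map_add [Add G] [TopologicalSpace G] [ContinuousAdd G]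
    [TopologicalSpace K] [T2Space K] {F : G → K} (hF : Continuous F) {D : Set G} (hD : Dense D)
    (hFD : ∀ φ ψ, F φ = F ψ → ∀ δ ∈ D, F (φ + δ) = F (ψ + δ))
    {φ ψ : G} (h : F φ = F ψ) (χ : G) : F (φ + χ) = F (ψ + χ) :=
  congrFun (Continuous.ext_on hD (hF.comp (continuous_const_add φ))
    (hF.comp (continuous_const_add ψ)) (hFD φ ψ h)) χ

variable [AddCommGroup G] {F : G → K}

def fiberAddSubgroup (hF : ∀ φ ψ χ, F φ = F ψ → F (φ + χ) = F (ψ + χ)) : AddSubgroup G where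
  carrier := F ⁻¹' {F 0}
  zero_mem' := rfl
  add_mem' {a b} ha hb := (hF a 0 b ha).trans (by rw [zero_add]; exact hb)
  neg_mem' {a} ha := by
    show F (-a) = F 0
    simpa only [add_neg_cancel, zero_add] using (hF a 0 (-a) ha).symm

variable (hF : ∀ φ ψ χ, F φ = F ψ → F (φ + χ) = F (ψ + χ))
include hF

theorem mem_fiberAddSubgroup {φ : G} : φ ∈ fiberAddSubgroup hF ↔ F φ = F 0 :=
  Iff.rfl

theorem map_eq_map_iff_neg_add_mem_fiberAddSubgroup {φ ψ : G} :
    F φ = F ψ ↔ -φ + ψ ∈ fiberAddSubgroup hF := by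
  rw [mem_fiberAddSubgroup]
  refine ⟨fun h ↦ ?_, fun h ↦ ?_⟩
  · simpa only [add_neg_cancel, add_comm ψ] using (hF φ ψ (-φ) h).symm
  · simpa only [neg_add_cancel_comm, zero_add] using (hF _ 0 φ h).symm

theorem exists_quotient_homeomorph_fiberAddSubgroup [TopologicalSpace G] [CompactSpace G]
    [TopologicalSpace K] [T2Space K] (hFc : Continuous F) (hFs : Function.Surjective F) :
    ∃ e : (G ⧸ fiberAddSubgroup hF) ≃ₜ K, ∀ φ : G, e φ = F φ := by
  have hresp (a b : G) (hab : QuotientAddGroup.leftRel (fiberAddSubgroup hF) a b) : F a = F b :=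
    (map_eq_map_iff_neg_add_mem_fiberAddSubgroup hF).mpr (QuotientAddGroup.leftRel_apply.mp hab)
  let f : G ⧸ fiberAddSubgroup hF → K := Quotient.lift F hresp
  have hf : Function.Bijective f := by
    refine ⟨?_, fun κ ↦ ?_⟩
    · rintro ⟨a⟩ ⟨b⟩ hab
      exact QuotientAddGroup.eq.mpr ((map_eq_map_iff_neg_add_mem_fiberAddSubgroup hF).mp hab)
    · obtain ⟨φ, rfl⟩ := hFs κ
      exact ⟨φ, rfl⟩
  exact ⟨(hFc.quotient_lift hresp).homeoOfEquivCompactToT2 (f := Equiv.ofBijective f hf),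
    fun _ ↦ rfl⟩

end FiberSubgroup

instance : Fact (0 < 2 * Real.pi) :=
  ⟨Real.two_pi_pos⟩

theorem fiber_is_closed_subgroup_and_quotient_homeo_general
    (n : ℕ) (ω : Fin n → ℝ) (hω : RationallyIndependent ω)
    (K : Type*) [TopologicalSpace K] [T2Space K]
    (F : Torus n → K) (hFcont : Continuous F) (hFsurj : Function.Surjective F)
    (𝔊 : ℝ → K → K)
    (hconj : ∀ (φ : Torus n) (t : ℝ), F (φ + torusVec ω t) = 𝔊 t (F φ)) :
    ∃ Λ : AddSubgroup (Torus n),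
      (Λ : Set (Torus n)) = F ⁻¹' {F 0} ∧
      IsClosed (Λ : Set (Torus n)) ∧
      ∃ e : (Torus n ⧸ Λ) ≃ₜ K, ∀ φ : Torus n, e (QuotientAddGroup.mk φ) = F φ := by
  have hF (φ ψ χ : Torus n) (h : F φ = F ψ) : F (φ + χ) = F (ψ + χ) := by
    refine (denseRange_torusVec hω).map_add_eq_map_add hFcont ?_ h χ
    rintro φ ψ h - ⟨t, rfl⟩
    rw [hconj, hconj, h]
  obtain ⟨e, he⟩ := exists_quotient_homeomorph_fiberAddSubgroup hF hFcont hFsurj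
  exact ⟨fiberAddSubgroup hF, rfl, isClosed_singleton.preimage hFcont, e, he⟩

/-- in the setting of a continuous surjection `F : 𝕋ⁿ → K` semiconjugating a
quasi-periodic flow to a continuous flow `𝔊` on a compact Hausdorff space `K`, the set
`Λ = F⁻¹({F 0})` is a closed subgroup of `𝕋ⁿ` and `F` induces a homeomorphism `𝕋ⁿ/Λ ≃ K`. -/
theorem fiber_is_closed_subgroup_and_quotient_homeo
    (n : ℕ) (ω : Fin n → ℝ) (hω : RationallyIndependent ω)
    (K : Type*) [TopologicalSpace K] [CompactSpace K] [T2Space K]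
    (F : Torus n → K) (hFcont : Continuous F) (hFsurj : Function.Surjective F)
    (𝔊 : ℝ → K → K)
    (h𝔊cont : Continuous fun q : ℝ × K => 𝔊 q.1 q.2)
    (h𝔊zero : ∀ κ : K, 𝔊 0 κ = κ)
    (h𝔊add : ∀ t s : ℝ, ∀ κ : K, 𝔊 (t + s) κ = 𝔊 t (𝔊 s κ))
    (hconj : ∀ (φ : Torus n) (t : ℝ), F (φ + torusVec ω t) = 𝔊 t (F φ)) :
    ∃ Λ : AddSubgroup (Torus n),
      (Λ : Set (Torus n)) = F ⁻¹' {F 0} ∧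
      IsClosed (Λ : Set (Torus n)) ∧
      ∃ e : (Torus n ⧸ Λ) ≃ₜ K, ∀ φ : Torus n, e (QuotientAddGroup.mk φ) = F φ :=
  fiber_is_closed_subgroup_and_quotient_homeo_general n ω hω K F hFcont hFsurj 𝔊 hconj
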